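/- Let F : ℝ³ → ℝ⁴ be the chart map of the cubic model of S³, defined by F(x) = (1, x)/√(1 + ‖x‖₂²). Let γ : [0,1] → ℝ³ be a continuously differentiable path whose image lies in the cube [-1,1]³. Then the arclength of the image path F ∘ γ on the unit sphere S³ ⊂ ℝ⁴ is bounded in terms of the arclength of γ: (1/4)·∫₀¹ ‖γ′(t)‖₂ dt ≤ ∫₀¹ ‖(F ∘ γ)′(t)‖₂ dt ≤ ∫₀¹ ‖γ′(t)‖₂ dt. -/

import Mathlib

/-- The sup norm of a point of Euclidean space (the `ℓ^∞` norm). -/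
noncomputable def supNorm {m : ℕ} (q : EuclideanSpace ℝ (Fin m)) : ℝ :=
  ‖(EuclideanSpace.equiv (Fin m) ℝ) q‖

/-- The chart map `F : ℝ³ → ℝ⁴` of the cubic model of `S³`:
`F(x) = (1, x) / √(1 + ‖x‖₂²)`. -/
noncomputable def chartMap (x : EuclideanSpace ℝ (Fin 3)) : EuclideanSpace ℝ (Fin 4) :=
  (Real.sqrt (1 + ‖x‖ ^ 2))⁻¹ •
    (EuclideanSpace.equiv (Fin 4) ℝ).symm (Fin.cons 1 ((EuclideanSpace.equiv (Fin 3) ℝ) x))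

open scoped RealInnerProductSpace

/-- Auxiliary map: `x ↦ (a, x)` into `ℝ⁴`. -/
noncomputable def auxMap (a : ℝ) (x : EuclideanSpace ℝ (Fin 3)) : EuclideanSpace ℝ (Fin 4) :=
  (EuclideanSpace.equiv (Fin 4) ℝ).symm (Fin.cons a ((EuclideanSpace.equiv (Fin 3) ℝ) x))

lemma auxMap_inner (a b : ℝ) (x y : EuclideanSpace ℝ (Fin 3)) :
    ⟪auxMap a x, auxMap b y⟫ = a*b + ⟪x,y⟫ := by
  simp [auxMap, PiLp.inner_apply, Fin.sum_univ_succ, RCLike.inner_apply]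
  ring

lemma auxMap_continuous (a : ℝ) : Continuous (auxMap a) := by
  refine ((EuclideanSpace.equiv (Fin 4) ℝ).symm.continuous).comp ?_
  refine continuous_pi fun i => ?_
  refine Fin.cases ?_ (fun j => ?_) i
  · simpa using continuous_const
  · simp only [Fin.cons_succ]
    exact (continuous_apply j).comp (EuclideanSpace.equiv (Fin 3) ℝ).continuous

lemma hasDerivAt_auxMap (a : ℝ) {γ : ℝ → EuclideanSpace ℝ (Fin 3)}
    {v : EuclideanSpace ℝ (Fin 3)} {t : ℝ} (h : HasDerivAt γ v t) :
    HasDerivAt (fun s => auxMap a (γ s)) (auxMap 0 v) t := by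
  have h4 : HasDerivAt (fun s => (Fin.cons a ((EuclideanSpace.equiv (Fin 3) ℝ) (γ s)) : Fin 4 → ℝ))
      (Fin.cons 0 ((EuclideanSpace.equiv (Fin 3) ℝ) v)) t := by
    rw [hasDerivAt_pi]
    intro i
    refine Fin.cases ?_ (fun j => ?_) i
    · simpa using hasDerivAt_const t a
    · simp only [Fin.cons_succ]
      exact ((EuclideanSpace.proj j).hasFDerivAt.comp_hasDerivAt t h)
  exact ((EuclideanSpace.equiv (Fin 4) ℝ).symm.toContinuousLinearMap.hasFDerivAt.comp_hasDerivAt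
    t h4)

lemma normD_bounds (x v : EuclideanSpace ℝ (Fin 3)) (h3 : ‖x‖^2 ≤ 3) :
    (1/4: ℝ) * ‖v‖ ≤ ‖(-(⟪x,v⟫ / (Real.sqrt (1+‖x‖^2) * (1+‖x‖^2)))) • auxMap 1 x
        + (Real.sqrt (1+‖x‖^2))⁻¹ • auxMap 0 v‖ ∧
      ‖(-(⟪x,v⟫ / (Real.sqrt (1+‖x‖^2) * (1+‖x‖^2)))) • auxMap 1 x
        + (Real.sqrt (1+‖x‖^2))⁻¹ • auxMap 0 v‖ ≤ ‖v‖ := by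
  set u : ℝ := 1 + ‖x‖^2 with hu
  have hu1 : (1:ℝ) ≤ u := by nlinarith [sq_nonneg (‖x‖)]
  have hu0 : (0:ℝ) < u := by linarith
  have hu4 : u ≤ 4 := by rw [hu]; linarith
  set r : ℝ := Real.sqrt u with hr
  have hr0 : 0 < r := Real.sqrt_pos.mpr hu0
  have hr2 : r^2 = u := Real.sq_sqrt hu0.le
  set c : ℝ := ⟪x,v⟫ with hc
  set D := (-(c / (r * u))) • auxMap 1 x + r⁻¹ • auxMap 0 v with hD
  have hx2 : ‖x‖^2 = u - 1 := by rw [hu]; ring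
  have hA : ‖auxMap 1 x‖^2 = u := by
    rw [← real_inner_self_eq_norm_sq, auxMap_inner, real_inner_self_eq_norm_sq, hx2]; ring
  have hB : ‖auxMap 0 v‖^2 = ‖v‖^2 := by
    rw [← real_inner_self_eq_norm_sq, auxMap_inner, real_inner_self_eq_norm_sq]; ring
  have hAB : ⟪auxMap 1 x, auxMap 0 v⟫ = c := by rw [auxMap_inner, hc]; ring
  have hnD : ‖D‖^2 = ‖v‖^2/u - c^2/u^2 := by
    rw [hD, norm_add_sq_real, norm_smul, norm_smul, mul_pow, mul_pow,
      Real.norm_eq_abs, Real.norm_eq_abs, sq_abs, sq_abs,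
      real_inner_smul_left, real_inner_smul_right, hAB, hA, hB, ← hr2]
    field_simp
    ring
  have hc2 : c^2 ≤ ‖x‖^2 * ‖v‖^2 := by
    have h := abs_real_inner_le_norm x v
    nlinarith [abs_nonneg c, sq_abs c, norm_nonneg x, norm_nonneg v]
  have e1 : c^2 ≤ (u-1) * ‖v‖^2 := by rw [← hx2]; exact hc2
  constructor
  · have huu : u * u ≤ 16 := by nlinarith
    have hstep : ‖v‖^2 / 16 ≤ (u*‖v‖^2 - c^2)/u^2 := by
      rw [div_le_div_iff₀ (by norm_num) (by positivity)]
      nlinarith [sq_nonneg (‖v‖), e1, mul_le_mul_of_nonneg_right huu (sq_nonneg (‖v‖))]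
    have heq : (u*‖v‖^2 - c^2)/u^2 = ‖v‖^2/u - c^2/u^2 := by field_simp
    rw [heq] at hstep
    have hlow : ‖v‖^2 / 16 ≤ ‖D‖^2 := by rw [hnD]; exact hstep
    have h := Real.sqrt_le_sqrt hlow
    rw [Real.sqrt_sq (norm_nonneg D)] at h
    calc (1/4:ℝ) * ‖v‖ = Real.sqrt (‖v‖^2/16) := by
          rw [show ‖v‖^2/16 = ((1/4)*‖v‖)^2 by ring, Real.sqrt_sq (by positivity)]
      _ ≤ ‖D‖ := h
  · have h1 : ‖v‖^2/u ≤ ‖v‖^2 := div_le_self (sq_nonneg _) hu1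
    have h2 : (0:ℝ) ≤ c^2/u^2 := by positivity
    have hup : ‖D‖^2 ≤ ‖v‖^2 := by rw [hnD]; linarith
    have h := Real.sqrt_le_sqrt hup
    rwa [Real.sqrt_sq (norm_nonneg D), Real.sqrt_sq (norm_nonneg v)] at h

lemma hasDerivAt_chart {γ : ℝ → EuclideanSpace ℝ (Fin 3)} {v : EuclideanSpace ℝ (Fin 3)}
    {t : ℝ} (h : HasDerivAt γ v t) :
    HasDerivAt (chartMap ∘ γ)
      ((-(⟪γ t, v⟫ / (Real.sqrt (1+‖γ t‖^2) * (1+‖γ t‖^2)))) • auxMap 1 (γ t)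
        + (Real.sqrt (1+‖γ t‖^2))⁻¹ • auxMap 0 v) t := by
  set u : ℝ := 1 + ‖γ t‖^2 with hu
  have hu0 : (0:ℝ) < u := by nlinarith [sq_nonneg (‖γ t‖)]
  have hr0 : 0 < Real.sqrt u := Real.sqrt_pos.mpr hu0
  have hr2 : Real.sqrt u ^ 2 = u := Real.sq_sqrt hu0.le
  have hnorm : HasDerivAt (fun s => 1 + ‖γ s‖^2) (2*⟪γ t, v⟫) t := by
    have hi := (h.inner ℝ h)
    simp only [real_inner_self_eq_norm_sq] at hi
    have := hi.const_add (1:ℝ)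
    refine this.congr_deriv ?_
    rw [real_inner_comm v (γ t)]; ring
  have hs : HasDerivAt (fun s => (Real.sqrt (1 + ‖γ s‖^2))⁻¹)
      (-(⟪γ t, v⟫ / (Real.sqrt u * u))) t := by
    have hsq : HasDerivAt (fun s => Real.sqrt (1 + ‖γ s‖^2))
        (1 / (2 * Real.sqrt u) * (2*⟪γ t, v⟫)) t :=
      (Real.hasDerivAt_sqrt hu0.ne').comp t hnorm
    have := hsq.fun_inv hr0.ne'
    refine this.congr_deriv ?_
    rw [← hr2]
    field_simp
    ring
  have hA : HasDerivAt (fun s => auxMap 1 (γ s)) (auxMap 0 v) t := hasDerivAt_auxMap 1 h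
  have h2 := hs.fun_smul hA
  have heq : (fun s => (Real.sqrt (1 + ‖γ s‖ ^ 2))⁻¹ • auxMap 1 (γ s)) = chartMap ∘ γ := rfl
  rw [heq] at h2
  refine h2.congr_deriv ?_
  rw [← hu, add_comm]

lemma norm_sq_le_three {x : EuclideanSpace ℝ (Fin 3)} (h : supNorm x ≤ 1) : ‖x‖^2 ≤ 3 := by
  have hi : ∀ i : Fin 3, |x i| ≤ 1 := by
    intro i
    have := norm_le_pi_norm ((EuclideanSpace.equiv (Fin 3) ℝ) x) i
    simpa [supNorm, Real.norm_eq_abs] using this.trans h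
  have hn : ‖x‖^2 = ∑ i, x i ^ 2 := by
    rw [EuclideanSpace.norm_eq, Real.sq_sqrt (by positivity)]
    simp [Real.norm_eq_abs, sq_abs]
  rw [hn, Fin.sum_univ_three]
  nlinarith [hi 0, hi 1, hi 2, abs_nonneg (x 0), abs_nonneg (x 1), abs_nonneg (x 2),
    sq_abs (x 0), sq_abs (x 1), sq_abs (x 2)]

/-- If `γ : [0,1] → ℝ³` is a continuously differentiable path whose image lies
in the cube `[-1,1]³`, then the arclength of the image path `F ∘ γ` on `S³` is bounded via the
arclength of `γ`:
`(1/4)·∫₀¹ ‖γ'(t)‖ dt ≤ ∫₀¹ ‖(F ∘ γ)'(t)‖ dt ≤ ∫₀¹ ‖γ'(t)‖ dt`. -/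
theorem chartMap_arclength_distortion
    (γ : ℝ → EuclideanSpace ℝ (Fin 3)) (γ' : ℝ → EuclideanSpace ℝ (Fin 3))
    (hderiv : ∀ t ∈ Set.Icc (0 : ℝ) 1, HasDerivAt γ (γ' t) t)
    (hcont : ContinuousOn γ' (Set.Icc (0 : ℝ) 1))
    (hcube : ∀ t ∈ Set.Icc (0 : ℝ) 1, supNorm (γ t) ≤ 1) :
    (1 / 4 : ℝ) * ∫ t in (0 : ℝ)..1, ‖γ' t‖ ≤ ∫ t in (0 : ℝ)..1, ‖deriv (chartMap ∘ γ) t‖ ∧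
    ∫ t in (0 : ℝ)..1, ‖deriv (chartMap ∘ γ) t‖ ≤ ∫ t in (0 : ℝ)..1, ‖γ' t‖ := by
  set D : ℝ → EuclideanSpace ℝ (Fin 4) := fun t =>
    (-(⟪γ t, γ' t⟫ / (Real.sqrt (1+‖γ t‖^2) * (1+‖γ t‖^2)))) • auxMap 1 (γ t)
      + (Real.sqrt (1+‖γ t‖^2))⁻¹ • auxMap 0 (γ' t) with hDdef
  have huIcc : Set.uIcc (0:ℝ) 1 = Set.Icc (0:ℝ) 1 := Set.uIcc_of_le zero_le_one
  have hderivD : ∀ t ∈ Set.Icc (0:ℝ) 1, deriv (chartMap ∘ γ) t = D t := fun t ht =>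
    (hasDerivAt_chart (hderiv t ht)).deriv
  have hbound : ∀ t ∈ Set.Icc (0:ℝ) 1, (1/4:ℝ)*‖γ' t‖ ≤ ‖D t‖ ∧ ‖D t‖ ≤ ‖γ' t‖ := fun t ht =>
    normD_bounds (γ t) (γ' t) (norm_sq_le_three (hcube t ht))
  -- continuity of D on [0,1]
  have hγc : ContinuousOn γ (Set.Icc (0:ℝ) 1) := fun t ht =>
    (hderiv t ht).continuousAt.continuousWithinAt
  have hu0 : ∀ t : ℝ, (0:ℝ) < 1 + ‖γ t‖^2 := fun t => by nlinarith [sq_nonneg (‖γ t‖)]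
  have huc : ContinuousOn (fun t => 1 + ‖γ t‖^2) (Set.Icc (0:ℝ) 1) :=
    continuousOn_const.add ((hγc.norm).pow 2)
  have hrc : ContinuousOn (fun t => Real.sqrt (1 + ‖γ t‖^2)) (Set.Icc (0:ℝ) 1) :=
    Real.continuous_sqrt.comp_continuousOn huc
  have hrne : ∀ t ∈ Set.Icc (0:ℝ) 1, Real.sqrt (1 + ‖γ t‖^2) ≠ 0 := fun t _ =>
    (Real.sqrt_pos.mpr (hu0 t)).ne'
  have hDc : ContinuousOn D (Set.Icc (0:ℝ) 1) := by
    apply ContinuousOn.add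
    · apply ContinuousOn.fun_smul
      · apply ContinuousOn.neg
        apply ContinuousOn.div (hγc.inner hcont) (hrc.mul huc)
        intro t ht
        exact mul_ne_zero (hrne t ht) (hu0 t).ne'
      · exact (auxMap_continuous 1).comp_continuousOn hγc
    · apply ContinuousOn.fun_smul (hrc.inv₀ hrne)
      exact (auxMap_continuous 0).comp_continuousOn hcont
  have hInt1 : IntervalIntegrable (fun t => ‖γ' t‖) MeasureTheory.volume 0 1 :=
    ContinuousOn.intervalIntegrable (by rw [huIcc]; exact hcont.norm)
  have hInt2 : IntervalIntegrable (fun t => ‖D t‖) MeasureTheory.volume 0 1 :=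
    ContinuousOn.intervalIntegrable (by rw [huIcc]; exact hDc.norm)
  have hcongr : (∫ t in (0:ℝ)..1, ‖deriv (chartMap ∘ γ) t‖) = ∫ t in (0:ℝ)..1, ‖D t‖ := by
    apply intervalIntegral.integral_congr
    intro t ht
    rw [huIcc] at ht
    simp only [hderivD t ht]
  constructor
  · rw [hcongr]
    calc (1/4:ℝ) * ∫ t in (0:ℝ)..1, ‖γ' t‖ = ∫ t in (0:ℝ)..1, (1/4:ℝ)*‖γ' t‖ :=
          (intervalIntegral.integral_const_mul _ _).symm
      _ ≤ ∫ t in (0:ℝ)..1, ‖D t‖ :=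
          intervalIntegral.integral_mono_on zero_le_one (hInt1.const_mul _) hInt2
            (fun t ht => (hbound t ht).1)
  · rw [hcongr]
    exact intervalIntegral.integral_mono_on zero_le_one hInt2 hInt1
      (fun t ht => (hbound t ht).2)
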